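/- Since α ↦ ln ∫_Θ ∏_{i=0}^K f_i(θ)^{α_i} dθ is convex on the simplex and the remaining terms of L(α) = Σ_i KL(f_i || π_α) are affine in α, the loss L is convex on the simplex; hence any local minimizer of L over the closed simplex is a global minimizer, and the minimizing pooled density π_α is unique. -/

import Mathlib

open MeasureTheory


lemma amgm2 (u v a b : ℝ) (hu : 0 ≤ u) (hv : 0 ≤ v) (ha : 0 ≤ a) (hb : 0 ≤ b) (hab : a + b = 1) :
    u ^ a * v ^ b ≤ a * u + b * v := by
  have := Real.geom_mean_le_arith_mean_weighted Finset.univ ![a,b] ![u,v]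
    (by intro i _; fin_cases i <;> simpa) (by simp [Fin.sum_univ_two, hab])
    (by intro i _; fin_cases i <;> simpa)
  simpa [Fin.prod_univ_two, Fin.sum_univ_two] using this

lemma holder_int {Θ : Type*} [MeasurableSpace Θ] (μ : Measure Θ)
    {u v : Θ → ℝ} (hu : Measurable u) (hv : Measurable v)
    (hupos : ∀ θ, 0 < u θ) (hvpos : ∀ θ, 0 < v θ)
    (hui : Integrable u μ) (hvi : Integrable v μ)
    (hIu : 0 < ∫ θ, u θ ∂μ) (hIv : 0 < ∫ θ, v θ ∂μ)
    {a b : ℝ} (ha : 0 < a) (hb : 0 < b) (hab : a + b = 1) :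
    ∫ θ, u θ ^ a * v θ ^ b ∂μ ≤ (∫ θ, u θ ∂μ) ^ a * (∫ θ, v θ ∂μ) ^ b := by
  have ha1 : a < 1 := by linarith
  have hmes : Measurable fun θ => u θ ^ a * v θ ^ b := by fun_prop
  have hnn : ∀ θ, 0 ≤ u θ ^ a * v θ ^ b := fun θ =>
    mul_nonneg (Real.rpow_nonneg (hupos θ).le _) (Real.rpow_nonneg (hvpos θ).le _)
  have hint : Integrable (fun θ => u θ ^ a * v θ ^ b) μ := by
    refine Integrable.mono' ((hui.const_mul a).add (hvi.const_mul b))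
      hmes.aestronglyMeasurable (Filter.Eventually.of_forall fun θ => ?_)
    rw [Real.norm_of_nonneg (hnn θ)]
    exact amgm2 _ _ _ _ (hupos θ).le (hvpos θ).le ha.le hb.le hab
  have hpq : Real.HolderConjugate (1/a) (1/b) := by
    rw [Real.holderConjugate_iff]
    constructor
    · rw [lt_div_iff₀ ha]; linarith
    · simp only [one_div, inv_inv]; exact hab
  have key := ENNReal.lintegral_mul_le_Lp_mul_Lq μ hpq
    (f := fun θ => ENNReal.ofReal (u θ ^ a)) (g := fun θ => ENNReal.ofReal (v θ ^ b))
    (by fun_prop) (by fun_prop)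
  have hfa : ∀ θ, ENNReal.ofReal (u θ ^ a) ^ (1/a : ℝ) = ENNReal.ofReal (u θ) := by
    intro θ
    rw [ENNReal.ofReal_rpow_of_pos (Real.rpow_pos_of_pos (hupos θ) _),
      ← Real.rpow_mul (hupos θ).le, mul_one_div_cancel ha.ne', Real.rpow_one]
  have hgb : ∀ θ, ENNReal.ofReal (v θ ^ b) ^ (1/b : ℝ) = ENNReal.ofReal (v θ) := by
    intro θ
    rw [ENNReal.ofReal_rpow_of_pos (Real.rpow_pos_of_pos (hvpos θ) _),
      ← Real.rpow_mul (hvpos θ).le, mul_one_div_cancel hb.ne', Real.rpow_one]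
  simp only [Pi.mul_apply, hfa, hgb, one_div_one_div] at key
  have hLHS : ∫⁻ θ, ENNReal.ofReal (u θ ^ a) * ENNReal.ofReal (v θ ^ b) ∂μ
      = ENNReal.ofReal (∫ θ, u θ ^ a * v θ ^ b ∂μ) := by
    rw [ofReal_integral_eq_lintegral_ofReal hint (Filter.Eventually.of_forall hnn)]
    congr 1; ext θ
    rw [ENNReal.ofReal_mul (Real.rpow_nonneg (hupos θ).le _)]
  have hRu : ∫⁻ θ, ENNReal.ofReal (u θ) ∂μ = ENNReal.ofReal (∫ θ, u θ ∂μ) :=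
    (ofReal_integral_eq_lintegral_ofReal hui
      (Filter.Eventually.of_forall fun θ => (hupos θ).le)).symm
  have hRv : ∫⁻ θ, ENNReal.ofReal (v θ) ∂μ = ENNReal.ofReal (∫ θ, v θ ∂μ) :=
    (ofReal_integral_eq_lintegral_ofReal hvi
      (Filter.Eventually.of_forall fun θ => (hvpos θ).le)).symm
  rw [hLHS, hRu, hRv, ENNReal.ofReal_rpow_of_pos hIu, ENNReal.ofReal_rpow_of_pos hIv,
    ← ENNReal.ofReal_mul (Real.rpow_nonneg hIu.le _)] at key
  exact (ENNReal.ofReal_le_ofReal_iff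
    (mul_nonneg (Real.rpow_nonneg hIu.le _) (Real.rpow_nonneg hIv.le _))).mp key


/-- The total KL loss `L(α) = Σᵢ KL(fᵢ ‖ π_α)` is convex on the closed simplex;
hence every local minimizer of `L` over the simplex is a global minimizer, and
the pooled density achieving the minimum is (almost everywhere) unique. -/
theorem total_kl_convex_unique {Θ : Type*} [MeasurableSpace Θ] (μ : Measure Θ) [SigmaFinite μ]
    (K : ℕ) (f : Fin (K + 1) → Θ → ℝ) (hmeas : ∀ i, Measurable (f i))
    (hpos : ∀ i θ, 0 < f i θ) (hdens : ∀ i, ∫ θ, f i θ ∂μ = 1)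
    (hcross : ∀ i j, Integrable (fun θ => f i θ * Real.log (f j θ)) μ)
    (S : Set (Fin (K + 1) → ℝ))
    (hS : S = {α : Fin (K + 1) → ℝ | (∀ i, 0 ≤ α i) ∧ ∑ i, α i = 1})
    (Z : (Fin (K + 1) → ℝ) → ℝ)
    (hZ : ∀ α, Z α = ∫ θ, ∏ j, (f j θ) ^ (α j) ∂μ)
    (π : (Fin (K + 1) → ℝ) → Θ → ℝ)
    (hπ : ∀ α θ, π α θ = (∏ j, (f j θ) ^ (α j)) / Z α)
    (L : (Fin (K + 1) → ℝ) → ℝ)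
    (hL : ∀ α, L α = ∑ i, ∫ θ, f i θ * Real.log (f i θ / π α θ) ∂μ) :
    ConvexOn ℝ S L ∧
    (∀ α ∈ S, (∃ ε > 0, ∀ β ∈ S, dist β α < ε → L α ≤ L β) → ∀ β ∈ S, L α ≤ L β) ∧
    (∀ α ∈ S, ∀ β ∈ S, IsMinOn L S α → IsMinOn L S β → π α =ᵐ[μ] π β) := by
  -- basic facts
  have hμ : μ ≠ 0 := by
    intro h
    have := hdens 0
    rw [h] at this
    simp at this
  have hfi : ∀ i, Integrable (f i) μ := by
    intro i
    by_contra h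
    have := hdens i
    rw [integral_undef h] at this
    exact one_ne_zero this.symm
  have hgmeas : ∀ α : Fin (K+1) → ℝ, Measurable (fun θ => ∏ j, (f j θ) ^ (α j)) := by
    intro α; fun_prop
  have hgpos : ∀ (α : Fin (K+1) → ℝ) θ, 0 < ∏ j, (f j θ) ^ (α j) :=
    fun α θ => Finset.prod_pos fun j _ => Real.rpow_pos_of_pos (hpos j θ) _
  have hSconv : Convex ℝ S := by rw [hS]; exact convex_stdSimplex ℝ _
  have hgint : ∀ α ∈ S, Integrable (fun θ => ∏ j, (f j θ) ^ (α j)) μ := by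
    intro α hα
    rw [hS] at hα
    refine Integrable.mono' (integrable_finset_sum Finset.univ
      (fun j _ => (hfi j).const_mul (α j))) (hgmeas α).aestronglyMeasurable
      (Filter.Eventually.of_forall fun θ => ?_)
    rw [Real.norm_of_nonneg (hgpos α θ).le]
    exact Real.geom_mean_le_arith_mean_weighted Finset.univ α (fun j => f j θ)
      (fun j _ => hα.1 j) hα.2 (fun j _ => (hpos j θ).le)
  have hZpos : ∀ α ∈ S, 0 < Z α := by
    intro α hα
    rw [hZ]
    rw [integral_pos_iff_support_of_nonneg (fun θ => (hgpos α θ).le) (hgint α hα)]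
    have : Function.support (fun θ => ∏ j, (f j θ) ^ (α j)) = Set.univ :=
      Set.eq_univ_of_forall fun θ => (hgpos α θ).ne'
    rw [this]
    exact Measure.measure_univ_pos.mpr hμ
  -- pointwise combination identity
  have hcombo : ∀ (x y : Fin (K+1) → ℝ) (a b : ℝ) (θ : Θ),
      ∏ j, (f j θ) ^ ((a • x + b • y) j)
        = (∏ j, (f j θ) ^ (x j)) ^ a * (∏ j, (f j θ) ^ (y j)) ^ b := by
    intro x y a b θ
    rw [← Real.finset_prod_rpow _ _ (fun j _ => (Real.rpow_pos_of_pos (hpos j θ) _).le),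
      ← Real.finset_prod_rpow _ _ (fun j _ => (Real.rpow_pos_of_pos (hpos j θ) _).le),
      ← Finset.prod_mul_distrib]
    refine Finset.prod_congr rfl fun j _ => ?_
    rw [← Real.rpow_mul (hpos j θ).le, ← Real.rpow_mul (hpos j θ).le,
      ← Real.rpow_add (hpos j θ)]
    simp [mul_comm]
  -- Hölder for Z
  have hZhold : ∀ x ∈ S, ∀ y ∈ S, ∀ a b : ℝ, 0 < a → 0 < b → a + b = 1 →
      Z (a • x + b • y) ≤ Z x ^ a * Z y ^ b := by
    intro x hx y hy a b ha hb hab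
    have h1 := holder_int μ (hgmeas x) (hgmeas y) (hgpos x) (hgpos y)
      (hgint x hx) (hgint y hy) (by rw [← hZ]; exact hZpos x hx)
      (by rw [← hZ]; exact hZpos y hy) ha hb hab
    rw [hZ, hZ, hZ]
    calc ∫ θ, ∏ j, (f j θ) ^ ((a • x + b • y) j) ∂μ
        = ∫ θ, (∏ j, (f j θ) ^ (x j)) ^ a * (∏ j, (f j θ) ^ (y j)) ^ b ∂μ := by
          exact integral_congr_ae (Filter.Eventually.of_forall fun θ => hcombo x y a b θ)
      _ ≤ _ := h1
  have hlogZ : ∀ x ∈ S, ∀ y ∈ S, ∀ a b : ℝ, 0 < a → 0 < b → a + b = 1 →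
      Real.log (Z (a • x + b • y)) ≤ a * Real.log (Z x) + b * Real.log (Z y) := by
    intro x hx y hy a b ha hb hab
    have hmem : a • x + b • y ∈ S := hSconv hx hy ha.le hb.le hab
    calc Real.log (Z (a • x + b • y)) ≤ Real.log (Z x ^ a * Z y ^ b) :=
          Real.log_le_log (hZpos _ hmem) (hZhold x hx y hy a b ha hb hab)
      _ = a * Real.log (Z x) + b * Real.log (Z y) := by
          rw [Real.log_mul (Real.rpow_pos_of_pos (hZpos x hx) _).ne'
            (Real.rpow_pos_of_pos (hZpos y hy) _).ne',
            Real.log_rpow (hZpos x hx), Real.log_rpow (hZpos y hy)]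
  -- the affine decomposition of L
  set C : ℝ := ∑ i, ∫ θ, f i θ * Real.log (f i θ) ∂μ with hC
  set c : Fin (K+1) → ℝ := fun j => ∑ i, ∫ θ, f i θ * Real.log (f j θ) ∂μ with hc
  have hLform : ∀ α ∈ S, L α = C - ∑ j, α j * c j + (K+1) * Real.log (Z α) := by
    intro α hα
    have hint_i : ∀ i, ∫ θ, f i θ * Real.log (f i θ / π α θ) ∂μ
        = (∫ θ, f i θ * Real.log (f i θ) ∂μ)
          - ∑ j, α j * ∫ θ, f i θ * Real.log (f j θ) ∂μ + Real.log (Z α) := by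
      intro i
      have hBint : Integrable (fun θ => ∑ j, α j * (f i θ * Real.log (f j θ))) μ :=
        integrable_finset_sum Finset.univ (fun j _ => (hcross i j).const_mul (α j))
      have hpoint : ∀ θ, f i θ * Real.log (f i θ / π α θ)
          = (f i θ * Real.log (f i θ) - ∑ j, α j * (f i θ * Real.log (f j θ)))
            + Real.log (Z α) * f i θ := by
        intro θ
        have hπpos : 0 < π α θ := by
          rw [hπ]; exact div_pos (hgpos α θ) (hZpos α hα)
        have hlog : Real.log (f i θ / π α θ)
            = Real.log (f i θ) - ∑ j, α j * Real.log (f j θ) + Real.log (Z α) := by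
          rw [Real.log_div (hpos i θ).ne' hπpos.ne', hπ,
            Real.log_div (hgpos α θ).ne' (hZpos α hα).ne',
            Real.log_prod (fun j _ => (Real.rpow_pos_of_pos (hpos j θ) _).ne')]
          simp only [Real.log_rpow (hpos _ θ)]
          ring
        rw [hlog, mul_add, mul_sub, Finset.mul_sum]
        congr 1
        · congr 1
          exact Finset.sum_congr rfl fun j _ => by ring
        · ring
      calc ∫ θ, f i θ * Real.log (f i θ / π α θ) ∂μ
          = ∫ θ, (f i θ * Real.log (f i θ) - ∑ j, α j * (f i θ * Real.log (f j θ)))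
              + Real.log (Z α) * f i θ ∂μ :=
            integral_congr_ae (Filter.Eventually.of_forall hpoint)
        _ = (∫ θ, f i θ * Real.log (f i θ) ∂μ)
              - ∑ j, α j * ∫ θ, f i θ * Real.log (f j θ) ∂μ + Real.log (Z α) := by
            have hsubint : Integrable (fun θ => f i θ * Real.log (f i θ)
                - ∑ j, α j * (f i θ * Real.log (f j θ))) μ := (hcross i i).sub hBint
            rw [integral_add hsubint ((hfi i).const_mul _),
              integral_sub (hcross i i) hBint, integral_finset_sum _
                (fun j _ => (hcross i j).const_mul (α j)),
              integral_const_mul, hdens i, mul_one]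
            congr 2
            exact Finset.sum_congr rfl fun j _ => integral_const_mul _ _
    rw [hL]
    simp only [hint_i]
    rw [Finset.sum_add_distrib, Finset.sum_sub_distrib, Finset.sum_const,
      Finset.card_univ, Fintype.card_fin, nsmul_eq_mul]
    rw [Finset.sum_comm]
    push_cast
    congr 2
    · exact Finset.sum_congr rfl fun j _ => by rw [hc, Finset.mul_sum]
  -- convexity
  have hconv : ConvexOn ℝ S L := by
    refine ⟨hSconv, ?_⟩
    intro x hx y hy a b ha hb hab
    rcases eq_or_lt_of_le ha with rfl | ha'
    · have hb1 : b = 1 := by linarith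
      subst hb1
      simp
    rcases eq_or_lt_of_le hb with rfl | hb'
    · have ha1 : a = 1 := by linarith
      subst ha1
      simp
    have hmem : a • x + b • y ∈ S := hSconv hx hy ha hb hab
    have hlog := hlogZ x hx y hy a b ha' hb' hab
    have hsum : ∑ j, (a • x + b • y) j * c j
        = a * ∑ j, x j * c j + b * ∑ j, y j * c j := by
      rw [Finset.mul_sum, Finset.mul_sum, ← Finset.sum_add_distrib]
      exact Finset.sum_congr rfl fun j _ => by
        simp only [Pi.add_apply, Pi.smul_apply, smul_eq_mul]; ring
    simp only [smul_eq_mul]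
    rw [hLform x hx, hLform y hy, hLform _ hmem, hsum]
    have hK : (0:ℝ) ≤ (K+1 : ℝ) := by positivity
    have h2 : ((K:ℝ)+1) * Real.log (Z (a • x + b • y))
        ≤ a * (((K:ℝ)+1) * Real.log (Z x)) + b * (((K:ℝ)+1) * Real.log (Z y)) := by
      calc ((K:ℝ)+1) * Real.log (Z (a • x + b • y))
          ≤ ((K:ℝ)+1) * (a * Real.log (Z x) + b * Real.log (Z y)) :=
            mul_le_mul_of_nonneg_left hlog hK
        _ = _ := by ring
    have hCC : a * C + b * C = C := by rw [← add_mul, hab, one_mul]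
    linarith [h2, hCC]
  refine ⟨hconv, ?_, ?_⟩
  -- local min implies global min
  · intro α hα ⟨ε, hε, hloc⟩ β hβ
    have hloc' : IsLocalMinOn L S α := by
      have : {x | L α ≤ L x} ∈ nhdsWithin α S :=
        Metric.mem_nhdsWithin_iff.mpr ⟨ε, hε, fun γ hγ =>
          hloc γ hγ.2 (by simpa [Metric.mem_ball] using hγ.1)⟩
      exact this
    exact (IsMinOn.of_isLocalMinOn_of_convexOn hα hloc' hconv) hβ
  -- uniqueness of the pooled density
  · intro α hα β hβ hminα hminβ
    have hmS : (1/2 : ℝ) • α + (1/2 : ℝ) • β ∈ S :=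
      hSconv hα hβ (by norm_num) (by norm_num) (by norm_num)
    set m := (1/2 : ℝ) • α + (1/2 : ℝ) • β with hm
    have hLαβ : L α = L β := le_antisymm (hminα hβ) (hminβ hα)
    have h1 : L m ≤ 1/2 * L α + 1/2 * L β := by
      have := hconv.2 hα hβ (by norm_num : (0:ℝ) ≤ 1/2) (by norm_num : (0:ℝ) ≤ 1/2)
        (by norm_num : (1:ℝ)/2 + 1/2 = 1)
      rw [hm]
      simpa [smul_eq_mul] using this
    have h2 : L α ≤ L m := hminα hmS
    have hLm : L m = 1/2 * L α + 1/2 * L β := le_antisymm h1 (by rw [← hLαβ]; linarith)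
    have hsum : ∑ j, m j * c j = 1/2 * ∑ j, α j * c j + 1/2 * ∑ j, β j * c j := by
      rw [Finset.mul_sum, Finset.mul_sum, ← Finset.sum_add_distrib]
      exact Finset.sum_congr rfl fun j _ => by
        simp only [hm, Pi.add_apply, Pi.smul_apply, smul_eq_mul]; ring
    have hlogm : Real.log (Z m) = 1/2 * Real.log (Z α) + 1/2 * Real.log (Z β) := by
      have e1 := hLform α hα
      have e2 := hLform β hβ
      have e3 := hLform m hmS
      rw [e1, e2, e3, hsum] at hLm
      have hK : ((K:ℝ)+1) ≠ 0 := by positivity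
      have h4 : ((K:ℝ)+1) * Real.log (Z m)
          = ((K:ℝ)+1) * (1/2 * Real.log (Z α) + 1/2 * Real.log (Z β)) := by
        ring_nf at hLm ⊢
        linarith
      exact mul_left_cancel₀ hK h4
    have hZm : Z m = Z α ^ (1/2:ℝ) * Z β ^ (1/2:ℝ) := by
      have h0 : Z m = Real.exp (Real.log (Z m)) := (Real.exp_log (hZpos m hmS)).symm
      rw [h0, hlogm, Real.exp_add, Real.rpow_def_of_pos (hZpos α hα),
        Real.rpow_def_of_pos (hZpos β hβ), mul_comm (Real.log (Z α)) ((1:ℝ)/2),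
        mul_comm (Real.log (Z β)) ((1:ℝ)/2)]
    have hsq : ∀ x : ℝ, 0 < x → (x ^ (1/2:ℝ)) ^ 2 = x := by
      intro x hx
      rw [← Real.rpow_natCast (x ^ (1/2:ℝ)) 2, ← Real.rpow_mul hx.le]
      norm_num
    have hgm : ∀ θ, ∏ j, (f j θ) ^ (m j)
        = (∏ j, (f j θ) ^ (α j)) ^ (1/2:ℝ) * (∏ j, (f j θ) ^ (β j)) ^ (1/2:ℝ) :=
      fun θ => hcombo α β (1/2) (1/2) θ
    have hqid : ∀ θ, (Z β ^ (1/2:ℝ) * (∏ j, (f j θ) ^ (α j)) ^ (1/2:ℝ)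
        - Z α ^ (1/2:ℝ) * (∏ j, (f j θ) ^ (β j)) ^ (1/2:ℝ)) ^ 2
        = (Z β * (∏ j, (f j θ) ^ (α j)) + Z α * (∏ j, (f j θ) ^ (β j)))
          - (2 * (Z α ^ (1/2:ℝ) * Z β ^ (1/2:ℝ))) * (∏ j, (f j θ) ^ (m j)) := by
      intro θ
      rw [hgm θ]
      have e1 := hsq _ (hZpos α hα)
      have e2 := hsq _ (hZpos β hβ)
      have e3 := hsq _ (hgpos α θ)
      have e4 := hsq _ (hgpos β θ)
      set u := Z α ^ (1/2:ℝ)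
      set v := Z β ^ (1/2:ℝ)
      set p := (∏ j, (f j θ) ^ (α j)) ^ (1/2:ℝ)
      set q := (∏ j, (f j θ) ^ (β j)) ^ (1/2:ℝ)
      rw [← e1, ← e2, ← e3, ← e4]
      ring
    have hint1 : Integrable (fun θ => Z β * (∏ j, (f j θ) ^ (α j))
        + Z α * (∏ j, (f j θ) ^ (β j))) μ :=
      ((hgint α hα).const_mul _).add ((hgint β hβ).const_mul _)
    have hint2 : Integrable (fun θ =>
        (2 * (Z α ^ (1/2:ℝ) * Z β ^ (1/2:ℝ))) * (∏ j, (f j θ) ^ (m j))) μ :=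
      (hgint m hmS).const_mul _
    have hq2int : Integrable (fun θ => (Z β ^ (1/2:ℝ) * (∏ j, (f j θ) ^ (α j)) ^ (1/2:ℝ)
        - Z α ^ (1/2:ℝ) * (∏ j, (f j θ) ^ (β j)) ^ (1/2:ℝ)) ^ 2) μ := by
      have : (fun θ => (Z β ^ (1/2:ℝ) * (∏ j, (f j θ) ^ (α j)) ^ (1/2:ℝ)
          - Z α ^ (1/2:ℝ) * (∏ j, (f j θ) ^ (β j)) ^ (1/2:ℝ)) ^ 2)
          = fun θ => (Z β * (∏ j, (f j θ) ^ (α j)) + Z α * (∏ j, (f j θ) ^ (β j)))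
            - (2 * (Z α ^ (1/2:ℝ) * Z β ^ (1/2:ℝ))) * (∏ j, (f j θ) ^ (m j)) :=
        funext fun θ => hqid θ
      rw [this]
      exact hint1.sub hint2
    have hIq : ∫ θ, (Z β ^ (1/2:ℝ) * (∏ j, (f j θ) ^ (α j)) ^ (1/2:ℝ)
        - Z α ^ (1/2:ℝ) * (∏ j, (f j θ) ^ (β j)) ^ (1/2:ℝ)) ^ 2 ∂μ = 0 := by
      calc ∫ θ, (Z β ^ (1/2:ℝ) * (∏ j, (f j θ) ^ (α j)) ^ (1/2:ℝ)
            - Z α ^ (1/2:ℝ) * (∏ j, (f j θ) ^ (β j)) ^ (1/2:ℝ)) ^ 2 ∂μ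
          = ∫ θ, (Z β * (∏ j, (f j θ) ^ (α j)) + Z α * (∏ j, (f j θ) ^ (β j)))
            - (2 * (Z α ^ (1/2:ℝ) * Z β ^ (1/2:ℝ))) * (∏ j, (f j θ) ^ (m j)) ∂μ :=
            integral_congr_ae (Filter.Eventually.of_forall fun θ => hqid θ)
        _ = (Z β * Z α + Z α * Z β)
            - (2 * (Z α ^ (1/2:ℝ) * Z β ^ (1/2:ℝ))) * Z m := by
            rw [integral_sub hint1 hint2,
              integral_add ((hgint α hα).const_mul _) ((hgint β hβ).const_mul _),
              integral_const_mul, integral_const_mul, integral_const_mul, ← hZ, ← hZ, ← hZ]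
        _ = 0 := by
            rw [hZm]
            have e1 := hsq _ (hZpos α hα)
            have e2 := hsq _ (hZpos β hβ)
            set u := Z α ^ (1/2:ℝ)
            set v := Z β ^ (1/2:ℝ)
            rw [← e1, ← e2]
            ring
    have hq0 : ∀ᵐ θ ∂μ, Z β ^ (1/2:ℝ) * (∏ j, (f j θ) ^ (α j)) ^ (1/2:ℝ)
        = Z α ^ (1/2:ℝ) * (∏ j, (f j θ) ^ (β j)) ^ (1/2:ℝ) := by
      have h0 := (integral_eq_zero_iff_of_nonneg (fun θ => sq_nonneg _) hq2int).mp hIq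
      filter_upwards [h0] with θ hθ
      have : (Z β ^ (1/2:ℝ) * (∏ j, (f j θ) ^ (α j)) ^ (1/2:ℝ)
          - Z α ^ (1/2:ℝ) * (∏ j, (f j θ) ^ (β j)) ^ (1/2:ℝ)) ^ 2 = 0 := hθ
      have h5 := pow_eq_zero_iff (two_ne_zero) |>.mp this
      linarith [h5]
    filter_upwards [hq0] with θ hθ
    rw [hπ, hπ]
    have h6 : Z β * (∏ j, (f j θ) ^ (α j)) = Z α * (∏ j, (f j θ) ^ (β j)) := by
      have h7 := congrArg (fun t => t^2) hθ
      simp only [mul_pow] at h7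
      rw [hsq _ (hZpos α hα), hsq _ (hZpos β hβ), hsq _ (hgpos α θ), hsq _ (hgpos β θ)] at h7
      exact h7
    rw [div_eq_div_iff (hZpos α hα).ne' (hZpos β hβ).ne']
    linarith [h6]
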